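/- arXiv:2402.16158 — 4 statements merged into one kernel-verified Lean document; each statement's English description precedes it below -/
import Mathlib

section
/- Let t_1, …, t_n be i.i.d. real random variables with continuous CDF F, let t_{(k)} be the k-th order statistic, and let k̂ be an ε-approximate rank of t_{(k)}, i.e. |k̂ − k| ≤ εn. If X is a fresh independent sample from F, then |P(X ≤ t_{(k)}) − (k̂ + 0.5)/(n+1)| ≤ (⌊εn⌋ + 0.5)/(n+1). -/
/-!
Continuity of `F` makes the `n + 1` values `X, t_1, …, t_n` almost surely distinct, and for
distinct values `X ≤ t_(k)` holds exactly when fewer than `k` of the `t_j` lie below `X`, i.e. when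
the rank of `X` among all `n + 1` values is `< k`. The vector `(X, t_1, …, t_n)` is i.i.d., hence
exchangeable, so that rank is uniform on `{0, …, n}` and `P(X ≤ t_(k)) = k / (n + 1)` exactly.
The bound follows because `k - k̂` is an integer of absolute value at most `ε n`, hence at most
`⌊ε n⌋`.
-/

open MeasureTheory ProbabilityTheory

/-- The `k`-th order statistic (1-indexed) of a finite family of reals: the smallest `x`
such that at least `k` of the values are `≤ x`. -/
noncomputable def orderStat {ι : Type*} [Fintype ι] (t : ι → ℝ) (k : ℕ) : ℝ :=
  sInf {x : ℝ | k ≤ (Finset.univ.filter fun i => t i ≤ x).card}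

open Finset

section OrderStatistics

variable {ι : Type*} [Fintype ι]

-- `belowCount y (y i)` is the rank of `y i` among the values of `y`, counted from `0`.
noncomputable def belowCount (y : ι → ℝ) (x : ℝ) : ℕ := #{j | y j < x}

lemma belowCount_comp_equiv (y : ι → ℝ) (σ : ι ≃ ι) (x : ℝ) :
    belowCount (y ∘ σ) x = belowCount y x :=
  card_equiv σ (by simp)

lemma belowCount_lt_belowCount {y : ι → ℝ} {a b : ι} (hab : y a < y b) :
    belowCount y (y a) < belowCount y (y b) := by
  refine card_lt_card ((ssubset_iff_of_subset fun j hj => ?_).2 ⟨a, ?_⟩)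
  · simp only [mem_filter, mem_univ, true_and] at hj ⊢
    exact hj.trans hab
  · simpa using hab

lemma belowCount_self_lt_card (y : ι → ℝ) (i : ι) : belowCount y (y i) < Fintype.card ι :=
  card_lt_univ_of_notMem (x := i) (by simp)

lemma belowCount_self_injective {y : ι → ℝ} (hy : Function.Injective y) :
    Function.Injective fun i => belowCount y (y i) := by
  intro a b hab
  by_contra hne
  rcases (hy.ne hne).lt_or_gt with h | h
  · exact (belowCount_lt_belowCount h).ne hab
  · exact (belowCount_lt_belowCount h).ne' hab

-- For distinct values, `i ↦ belowCount y (y i)` is a bijection onto `{0, …, card ι - 1}`.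
lemma card_belowCount_self_lt {y : ι → ℝ} (hy : Function.Injective y) {k : ℕ}
    (hk : k ≤ Fintype.card ι) : #{i | belowCount y (y i) < k} = k := by
  let r : ι → Fin (Fintype.card ι) := fun i => ⟨belowCount y (y i), belowCount_self_lt_card y i⟩
  have hr : r.Bijective := (Fintype.bijective_iff_injective_and_card r).2
    ⟨fun a b h => belowCount_self_injective hy (congrArg Fin.val h), by simp⟩
  rw [card_bijective r hr (t := ({m | (m : ℕ) < k} : Finset (Fin _))) (by simp [r]),
    Fin.card_filter_val_lt, min_eq_right hk]

variable (t : ι → ℝ) {k : ℕ} {x : ℝ}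

lemma orderStat_le_of_le_card (hk : 1 ≤ k) (hx : k ≤ #{i | t i ≤ x}) : orderStat t k ≤ x := by
  refine csInf_le ?_ hx
  obtain ⟨b, hb⟩ := (Set.finite_range t).bddBelow
  refine ⟨b, fun z hz => ?_⟩
  obtain ⟨i, hi⟩ := card_pos.1 (hk.trans hz)
  exact (hb ⟨i, rfl⟩).trans (mem_filter.1 hi).2

lemma le_orderStat_of_card_lt (hk : k ≤ Fintype.card ι) (hx : #{i | t i ≤ x} < k) :
    x ≤ orderStat t k := by
  refine le_csInf ⟨⨆ i, t i, ?_⟩ fun z hz => ?_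
  · simpa [filter_true_of_mem fun i _ => le_ciSup (Set.finite_range t).bddAbove i] using hk
  · by_contra! hzx
    have hsub : #{i | t i ≤ z} ≤ #{i | t i ≤ x} :=
      card_le_card (monotone_filter_right _ fun i _ (h : t i ≤ z) => h.trans hzx.le)
    exact (hz.trans hsub).not_gt hx

lemma le_orderStat_iff (hk1 : 1 ≤ k) (hkn : k ≤ Fintype.card ι) (hx : x ∉ Set.range t) :
    x ≤ orderStat t k ↔ belowCount t x < k := by
  have hlt : univ.filter (fun i => t i < x) = univ.filter (fun i => t i ≤ x) :=
    filter_congr fun i _ => ⟨le_of_lt, fun h => h.lt_of_ne fun he => hx ⟨i, he⟩⟩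
  refine ⟨fun hle => ?_, fun h => le_orderStat_of_card_lt t hkn (hlt ▸ h)⟩
  by_contra! hkx
  obtain ⟨u, hu, hmax⟩ := (univ.filter fun i => t i < x).exists_max_image t
    (card_pos.1 (hk1.trans hkx))
  have hux : t u < x := (mem_filter.1 hu).2
  have : orderStat t k ≤ t u := orderStat_le_of_le_card t hk1 <| hkx.trans <|
    card_le_card (monotone_filter_right _ fun i _ (h : t i < x) => hmax i (by simpa using h))
  linarith

end OrderStatistics

lemma nullSingletonClass_of_continuous_cdf {μ : Measure ℝ} [IsProbabilityMeasure μ]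
    (hF : Continuous (cdf μ)) :
    NullSingletonClass μ where
  measure_singleton a := by
    rw [← measure_cdf μ, StieltjesFunction.measure_singleton,
      leftLim_eq_of_tendsto ((hF.tendsto a).mono_left nhdsWithin_le_nhds), sub_self,
      ENNReal.ofReal_zero]

lemma ae_fst_ne_snd (μ ν : Measure ℝ) [SFinite ν] [NullSingletonClass ν] :
    ∀ᵐ p ∂μ.prod ν, p.1 ≠ p.2 :=
  (Measure.ae_prod_iff_ae_ae (measurableSet_eq_fun measurable_fst measurable_snd).compl).2
    (ae_of_all _ fun x =>
      measure_mono_null (fun _ hy => Eq.symm (not_not.1 hy)) (measure_singleton x))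

section Pi

variable {ι : Type*} [Fintype ι] {μ : Measure ℝ} [IsProbabilityMeasure μ]

lemma ae_ne_pi [NullSingletonClass μ] {i j : ι} (hij : i ≠ j) :
    ∀ᵐ y ∂Measure.pi (fun _ : ι => μ), y i ≠ y j := by
  have hlaw : (Measure.pi fun _ : ι => μ).map (fun y => (y i, y j)) = μ.prod μ := by
    rw [((iIndepFun_pi (fun _ => aemeasurable_id)).indepFun hij).map_prod_eq_prod_map_map
      (measurable_pi_apply i).aemeasurable (measurable_pi_apply j).aemeasurable,
      (measurePreserving_eval _ i).map_eq, (measurePreserving_eval _ j).map_eq]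
  exact ae_of_ae_map (p := fun p : ℝ × ℝ => p.1 ≠ p.2) (by fun_prop) (hlaw ▸ ae_fst_ne_snd μ μ)

lemma ae_injective_pi [NullSingletonClass μ] :
    ∀ᵐ y ∂Measure.pi (fun _ : ι => μ), Function.Injective y := by
  have hall : ∀ᵐ y ∂Measure.pi (fun _ : ι => μ), ∀ i j, i ≠ j → y i ≠ y j := by
    simp only [ae_all_iff, Filter.eventually_imp_distrib_left]
    exact fun i j => ae_ne_pi
  exact hall.mono fun y hy a b => not_imp_not.1 (hy a b)

lemma measurableSet_belowCount_self_lt (i : ι) (k : ℕ) :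
    MeasurableSet {y : ι → ℝ | belowCount y (y i) < k} := by
  simp only [belowCount, card_filter]
  exact measurableSet_lt (Finset.measurable_sum _ fun j _ => Measurable.ite
    (measurableSet_lt (measurable_pi_apply j) (measurable_pi_apply i)) measurable_const
    measurable_const) measurable_const

lemma pi_belowCount_self_lt_eq (k : ℕ) (i j : ι) :
    Measure.pi (fun _ : ι => μ) {y | belowCount y (y i) < k}
      = Measure.pi (fun _ : ι => μ) {y | belowCount y (y j) < k} := by
  classical
  have hσ := measurePreserving_piCongrLeft (fun _ : ι => μ) (Equiv.swap i j)
  rw [← hσ.measure_preimage (measurableSet_belowCount_self_lt i k).nullMeasurableSet]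
  congr 1
  ext y
  have hy : MeasurableEquiv.piCongrLeft (fun _ => ℝ) (Equiv.swap i j) y
      = y ∘ Equiv.swap i j := by
    ext a
    simp [MeasurableEquiv.coe_piCongrLeft, Equiv.piCongrLeft_apply_eq_cast]
  simp [hy, belowCount_comp_equiv]

-- Exchangeability: the events `belowCount y (y j) < k`, `j : ι`, have equal probability, and
-- almost surely exactly `k` of them occur.
lemma pi_belowCount_self_lt [NullSingletonClass μ] (i : ι) {k : ℕ} (hk : k ≤ Fintype.card ι) :
    Measure.pi (fun _ : ι => μ) {y | belowCount y (y i) < k} = k / Fintype.card ι := by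
  set π := Measure.pi fun _ : ι => μ
  have hsum : ∑ j, π {y | belowCount y (y j) < k} = k :=
    calc ∑ j, π {y | belowCount y (y j) < k}
        = ∫⁻ y, ∑ j, {y : ι → ℝ | belowCount y (y j) < k}.indicator 1 y ∂π := by
          rw [lintegral_finsetSum _ fun j _ =>
            measurable_one.indicator (measurableSet_belowCount_self_lt j k)]
          simp only [lintegral_indicator_one (measurableSet_belowCount_self_lt _ k)]
      _ = ∫⁻ _, (k : ENNReal) ∂π := lintegral_congr_ae <| ae_injective_pi.mono fun y hy => by
          simp [Set.indicator_apply, card_belowCount_self_lt hy hk]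
      _ = k := by simp
  rw [sum_congr rfl fun j _ => pi_belowCount_self_lt_eq k j i, sum_const, card_univ,
    nsmul_eq_mul] at hsum
  rw [ENNReal.eq_div_iff (by simpa using (Fintype.card_pos_iff.2 ⟨i⟩).ne')
    (ENNReal.natCast_ne_top _), hsum]

end Pi

lemma measurePreserving_pi_of_iIndepFun {Ω ι α : Type*} [MeasurableSpace Ω] [Fintype ι]
    [MeasurableSpace α] {P : Measure Ω} [IsProbabilityMeasure P] {μ : Measure α}
    {t : ι → Ω → α} (hmeas : ∀ j, Measurable (t j)) (hlaw : ∀ j, P.map (t j) = μ)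
    (hindep : iIndepFun t P) :
    MeasurePreserving (fun ω j => t j ω) P (Measure.pi fun _ => μ) :=
  ⟨measurable_pi_lambda _ hmeas, by
    rw [hindep.map_fun_eq_pi_map fun j => (hmeas j).aemeasurable]
    simp only [hlaw]⟩

lemma measurePreserving_finCons {Ω α : Type*} [MeasurableSpace Ω] [MeasurableSpace α]
    {P : Measure Ω} [IsProbabilityMeasure P] {μ : Measure α} [IsProbabilityMeasure μ] {n : ℕ}
    {X : Ω → α} {Y : Ω → Fin n → α} (hX : MeasurePreserving X P μ)
    (hY : MeasurePreserving Y P (Measure.pi fun _ => μ)) (hXY : IndepFun X Y P) :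
    MeasurePreserving (fun ω => (Fin.cons (X ω) (Y ω) : Fin (n + 1) → α)) P
      (Measure.pi fun _ => μ) := by
  have hpair : MeasurePreserving (fun ω => (X ω, Y ω)) P (μ.prod (Measure.pi fun _ => μ)) :=
    ⟨hX.measurable.prodMk hY.measurable, by
      rw [hXY.map_prod_eq_prod_map_map hX.measurable.aemeasurable hY.measurable.aemeasurable,
        hX.map_eq, hY.map_eq]⟩
  convert (measurePreserving_piFinSuccAbove (fun _ => μ) 0).symm.comp hpair
  simp only [Function.comp_apply, MeasurableEquiv.piFinSuccAbove_symm_apply,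
    Fin.insertNthEquiv_zero]
  rfl

lemma le_orderStat_tail_iff {n k : ℕ} (hk1 : 1 ≤ k) (hkn : k ≤ n) {y : Fin (n + 1) → ℝ}
    (hy : Function.Injective y) :
    y 0 ≤ orderStat (Fin.tail y) k ↔ belowCount y (y 0) < k := by
  have hcount : belowCount y (y 0) = belowCount (Fin.tail y) (y 0) := by
    simp only [belowCount, card_filter, Fin.sum_univ_succ, lt_irrefl, if_false, zero_add]
    rfl
  rw [hcount, le_orderStat_iff _ hk1 (by simpa using hkn)]
  rintro ⟨j, hj⟩
  exact Fin.succ_ne_zero j (hy hj)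

theorem measure_le_orderStat {Ω : Type*} [MeasurableSpace Ω] {P : Measure Ω}
    [IsProbabilityMeasure P] {μ : Measure ℝ} [IsProbabilityMeasure μ] [NullSingletonClass μ]
    {n : ℕ} {t : Fin n → Ω → ℝ} {X : Ω → ℝ} (hX : MeasurePreserving X P μ)
    (ht : MeasurePreserving (fun ω j => t j ω) P (Measure.pi fun _ => μ))
    (hXt : IndepFun X (fun ω j => t j ω) P) {k : ℕ} (hk1 : 1 ≤ k) (hkn : k ≤ n) :
    P {ω | X ω ≤ orderStat (fun j => t j ω) k} = k / (n + 1) := by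
  have hg := measurePreserving_finCons hX ht hXt
  have hB : {y : Fin (n + 1) → ℝ | y 0 ≤ orderStat (Fin.tail y) k}
      =ᵐ[Measure.pi fun _ => μ] {y | belowCount y (y 0) < k} :=
    ae_injective_pi.mono fun y hy => propext (le_orderStat_tail_iff hk1 hkn hy)
  calc P {ω | X ω ≤ orderStat (fun j => t j ω) k}
      = P ((fun ω => (Fin.cons (X ω) (fun j => t j ω) : Fin (n + 1) → ℝ)) ⁻¹'
          {y | belowCount y (y 0) < k}) :=
        measure_congr (hg.quasiMeasurePreserving.preimage_ae_eq hB)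
    _ = k / (n + 1) := by
      rw [hg.measure_preimage (measurableSet_belowCount_self_lt 0 k).nullMeasurableSet,
        pi_belowCount_self_lt 0 (by simpa using hkn.trans n.le_succ)]
      simp

lemma abs_natCast_sub_le_floor {a b : ℕ} {c : ℝ} (h : |(a : ℝ) - b| ≤ c) :
    |(a : ℝ) - b| ≤ ⌊c⌋₊ := by
  have habs : |(a : ℝ) - b| = (((a : ℤ) - b).natAbs : ℝ) := by
    rw [Nat.cast_natAbs]
    push_cast
    rfl
  rw [habs] at h ⊢
  exact_mod_cast Nat.le_floor h

theorem approx_rank_prob_bound_general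
    {Ω : Type*} [MeasureSpace Ω] [IsProbabilityMeasure (ℙ : Measure Ω)]
    (n : ℕ) (t : Fin n → Ω → ℝ)
    (μ : Measure ℝ) [IsProbabilityMeasure μ]
    (hmeas : ∀ j, Measurable (t j))
    (hlaw : ∀ j, Measure.map (t j) ℙ = μ)
    (hindep : iIndepFun t ℙ)
    (hcont : Continuous fun x => (μ (Set.Iic x)).toReal)
    (k : ℕ) (hk1 : 1 ≤ k) (hkn : k ≤ n)
    (ε : ℝ)
    (khat : ℕ) (hkhat : |(khat : ℝ) - (k : ℝ)| ≤ ε * n)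
    (X : Ω → ℝ) (hX : Measurable X) (hXlaw : Measure.map X ℙ = μ)
    (hXindep : IndepFun X (fun ω => fun j => t j ω) ℙ) :
    |(ℙ {ω | X ω ≤ orderStat (fun j => t j ω) k}).toReal
        - ((khat : ℝ) + 0.5) / ((n : ℝ) + 1)|
      ≤ ((Nat.floor (ε * n) : ℝ) + 0.5) / ((n : ℝ) + 1) := by
  have : NullSingletonClass μ :=
    nullSingletonClass_of_continuous_cdf ((funext (cdf_eq_real μ)).symm ▸ hcont)
  have hprob : (ℙ {ω | X ω ≤ orderStat (fun j => t j ω) k}).toReal = k / (n + 1) := by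
    rw [measure_le_orderStat ⟨hX, hXlaw⟩ (measurePreserving_pi_of_iIndepFun hmeas hlaw hindep)
      hXindep hk1 hkn]
    simp [ENNReal.toReal_div, ENNReal.toReal_add]
  have hk : |(k : ℝ) - khat| ≤ ⌊ε * n⌋₊ :=
    abs_sub_comm (k : ℝ) khat ▸ abs_natCast_sub_le_floor hkhat
  rw [hprob, div_sub_div_same, abs_div, abs_of_pos (n.cast_add_one_pos (α := ℝ))]
  refine div_le_div_of_nonneg_right ?_ n.cast_add_one_pos.le
  rw [abs_le] at hk ⊢
  constructor <;> linarith [hk.1, hk.2]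

/-- Let `t_1, …, t_n` be i.i.d. real random variables with continuous CDF `F`, let `t_{(k)}`
be the `k`-th order statistic, and let `k̂` be an `ε`-approximate rank of `t_{(k)}`, i.e.
`|k̂ − k| ≤ ε n`.  If `X` is a fresh independent sample from `F`, then
`|P(X ≤ t_{(k)}) − (k̂ + 0.5) / (n + 1)| ≤ (⌊ε n⌋ + 0.5) / (n + 1)`. -/
theorem approx_rank_prob_bound
    {Ω : Type*} [MeasureSpace Ω] [IsProbabilityMeasure (ℙ : Measure Ω)]
    (n : ℕ) (t : Fin n → Ω → ℝ)
    (μ : Measure ℝ) [IsProbabilityMeasure μ]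
    (hmeas : ∀ j, Measurable (t j))
    (hlaw : ∀ j, Measure.map (t j) ℙ = μ)
    (hindep : iIndepFun t ℙ)
    (hcont : Continuous fun x => (μ (Set.Iic x)).toReal)
    (k : ℕ) (hk1 : 1 ≤ k) (hkn : k ≤ n)
    (ε : ℝ) (hε0 : 0 < ε) (hε1 : ε < 1)
    (khat : ℕ) (hkhat : |(khat : ℝ) - (k : ℝ)| ≤ ε * n)
    (X : Ω → ℝ) (hX : Measurable X) (hXlaw : Measure.map X ℙ = μ)
    (hXindep : IndepFun X (fun ω => fun j => t j ω) ℙ) :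
    |(ℙ {ω | X ω ≤ orderStat (fun j => t j ω) k}).toReal
        - ((khat : ℝ) + 0.5) / ((n : ℝ) + 1)|
      ≤ ((Nat.floor (ε * n) : ℝ) + 0.5) / ((n : ℝ) + 1) :=
  approx_rank_prob_bound_general n t μ hmeas hlaw hindep hcont k hk1 hkn ε khat hkhat X hX hXlaw
    hXindep
end

section
/- (Lemma on moduli of a multivariate CDF) Let X be a random vector in ℝ^m whose distribution has a continuous density with compact support, let q(x) = P(X ⪯ x) (coordinatewise order), and assume q is strictly increasing on its compact domain D in the sense that q(x) > q(y) whenever y ⪯ x, y ≠ x, x,y ∈ D. Then there exist monotonically increasing functions F_(−), F_(+) : (0,∞) → ℝ with F_(−)(ε) > 0 and F_(+)(ε) > 0 for every ε > 0 and lim_{ε→0} F_(−)(ε) = lim_{ε→0} F_(+)(ε) = 0, such that for all x, y ∈ D with y ⪯ x: F_(−)(‖x − y‖₂) ≤ q(x) − q(y) ≤ F_(+)(‖x − y‖₂). -/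
/-!
Write `A x = {z | z ⪯ x}`. The difference `A x \ A y` is covered by the `m` slabs
`{z | y i < z i ≤ x i}`, and a bounded density supported in a cube gives each slab mass
`O(x i - y i)`; hence `q` is Lipschitz, which yields the linear upper modulus `F₊` and makes `q`
continuous. For the lower modulus, the pairs `y ⪯ x` in `D` with `‖x - y‖ ≥ ε` form a compact
set on which the continuous function `q x - q y` is positive by strict monotonicity, so its
infimum there is positive; this infimum, capped by `ε`, is `F₋ ε`.
-/

open MeasureTheory ProbabilityTheory Set Filter Topology
open scoped ENNReal NNReal

structure IsModulus (F : ℝ → ℝ) : Prop where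
  monotoneOn : MonotoneOn F (Ioi 0)
  pos : ∀ ε : ℝ, 0 < ε → 0 < F ε
  tendsto : Tendsto F (𝓝[>] 0) (𝓝 0)

theorem LipschitzWith.exists_isModulus {α β : Type*} [PseudoMetricSpace α] [PseudoMetricSpace β]
    {K : ℝ≥0} {f : α → β} (hf : LipschitzWith K f) :
    ∃ F, IsModulus F ∧ ∀ x y, dist (f x) (f y) ≤ F (dist x y) := by
  have hK : (0 : ℝ) < K + 1 := by positivity
  refine ⟨fun ε => (K + 1) * ε,
    ⟨fun _ _ _ _ hab => mul_le_mul_of_nonneg_left hab hK.le, fun ε hε => by positivity, ?_⟩,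
    fun x y => (hf.dist_le_mul x y).trans
      (mul_le_mul_of_nonneg_right (le_add_of_nonneg_right zero_le_one) dist_nonneg)⟩
  have : Tendsto (fun ε : ℝ => (K + 1) * ε) (𝓝 0) (𝓝 0) := by
    simpa using (continuous_const_mul ((K : ℝ) + 1)).tendsto 0
  exact this.mono_left nhdsWithin_le_nhds

section LowerModulus

variable {β : Type*} [TopologicalSpace β] {s : Set β} {g d : β → ℝ}

/-- The `insert ε` keeps the infimum below `ε`, and away from the junk value `sInf ∅ = 0`. -/
noncomputable def lowerModulus (s : Set β) (g d : β → ℝ) (ε : ℝ) : ℝ :=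
  sInf (insert ε (g '' {p ∈ s | ε ≤ d p}))

theorem bddBelow_insert_image (hs : IsCompact s) (hg : ContinuousOn g s) (ε : ℝ) :
    BddBelow (insert ε (g '' {p ∈ s | ε ≤ d p})) :=
  ((hs.bddBelow_image hg).mono (image_mono (sep_subset _ _))).insert ε

theorem lowerModulus_le_self (hs : IsCompact s) (hg : ContinuousOn g s) (ε : ℝ) :
    lowerModulus s g d ε ≤ ε :=
  csInf_le (bddBelow_insert_image hs hg ε) (mem_insert _ _)

theorem lowerModulus_le (hs : IsCompact s) (hg : ContinuousOn g s) {p : β} (hp : p ∈ s) :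
    lowerModulus s g d (d p) ≤ g p :=
  csInf_le (bddBelow_insert_image hs hg _) (mem_insert_of_mem _ ⟨p, ⟨hp, le_rfl⟩, rfl⟩)

theorem monotone_lowerModulus (hs : IsCompact s) (hg : ContinuousOn g s) :
    Monotone (lowerModulus s g d) := by
  intro a b hab
  refine le_csInf (insert_nonempty _ _) ?_
  rintro t (rfl | ⟨p, ⟨hp, hbp⟩, rfl⟩)
  · exact (lowerModulus_le_self hs hg a).trans hab
  · exact csInf_le (bddBelow_insert_image hs hg a)
      (mem_insert_of_mem _ ⟨p, ⟨hp, hab.trans hbp⟩, rfl⟩)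

theorem lowerModulus_pos (hs : IsCompact s) (hg : ContinuousOn g s) (hd : Continuous d)
    (hgd : ∀ p ∈ s, 0 < d p → 0 < g p) {ε : ℝ} (hε : 0 < ε) : 0 < lowerModulus s g d ε := by
  have hK : IsCompact {p ∈ s | ε ≤ d p} := hs.inter_right (isClosed_le continuous_const hd)
  obtain ⟨c, hc, hcg⟩ := hK.exists_forall_le' (hg.mono (sep_subset _ _))
    fun p hp => hgd p hp.1 (hε.trans_le hp.2)
  refine (lt_min hε hc).trans_le (le_csInf (insert_nonempty _ _) ?_)
  rintro t (rfl | ⟨p, hp, rfl⟩)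
  · exact min_le_left _ _
  · exact (min_le_right _ _).trans (hcg p hp)

theorem isModulus_lowerModulus (hs : IsCompact s) (hg : ContinuousOn g s) (hd : Continuous d)
    (hgd : ∀ p ∈ s, 0 < d p → 0 < g p) : IsModulus (lowerModulus s g d) where
  monotoneOn := (monotone_lowerModulus hs hg).monotoneOn _
  pos _ := lowerModulus_pos hs hg hd hgd
  tendsto := by
    refine squeeze_zero' ?_ (Eventually.of_forall (lowerModulus_le_self hs hg))
      (tendsto_id.mono_left nhdsWithin_le_nhds)
    filter_upwards [self_mem_nhdsWithin] with ε hε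
    exact (lowerModulus_pos hs hg hd hgd hε).le

end LowerModulus

section Orthant

variable {ι : Type*}

theorem volume_slab_inter_cube_le [Fintype ι] (i : ι) (a b R : ℝ) :
    volume ({z : EuclideanSpace ℝ ι | z i ∈ Ioc a b} ∩ {z | ∀ j, z j ∈ Metric.closedBall 0 R}) ≤
      ENNReal.ofReal (2 * R) ^ (Fintype.card ι - 1) * ENNReal.ofReal (b - a) := by
  classical
  let t : ι → Set ℝ := Function.update (fun _ => Metric.closedBall 0 R) i (Ioc a b)
  have hsub : {z : EuclideanSpace ℝ ι | z i ∈ Ioc a b} ∩ {z | ∀ j, z j ∈ Metric.closedBall 0 R} ⊆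
      WithLp.ofLp ⁻¹' univ.pi t := by
    rintro z ⟨hzi, hz⟩ j -
    by_cases hj : j = i
    · subst hj; simpa [t] using hzi
    · simpa [t, hj] using hz j
  have hvol :
      volume (WithLp.ofLp ⁻¹' univ.pi t : Set (EuclideanSpace ℝ ι)) = ∏ j, volume (t j) := by
    rw [(PiLp.volume_preserving_ofLp ι).measure_preimage
      (MeasurableSet.univ_pi fun j => ?_).nullMeasurableSet, volume_pi_pi]
    by_cases hj : j = i
    · subst hj; simp [t]
    · simp [t, hj, Metric.isClosed_closedBall.measurableSet]
  refine (measure_mono hsub).trans_eq ?_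
  rw [hvol]
  simp only [t, Function.apply_update (fun _ (s : Set ℝ) => volume s)]
  rw [Finset.prod_update_of_mem (Finset.mem_univ i)]
  simp [Real.volume_closedBall, Real.volume_Ioc, Finset.card_univ_sdiff, mul_comm]

theorem exists_withDensity_slab_le [Fintype ι] {f : EuclideanSpace ℝ ι → ℝ} (hf : Continuous f)
    (hfs : HasCompactSupport f) :
    ∃ K : ℝ≥0, ∀ i a b, volume.withDensity (fun z => ENNReal.ofReal (f z)) {z | z i ∈ Ioc a b} ≤
      K * ENNReal.ofReal (b - a) := by
  obtain ⟨M, hM⟩ := hf.bddAbove_range_of_hasCompactSupport hfs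
  obtain ⟨R, hR⟩ := hfs.isBounded.subset_closedBall 0
  let cube : Set (EuclideanSpace ℝ ι) := {z | ∀ j, z j ∈ Metric.closedBall 0 R}
  have hcube : MeasurableSet cube := by
    simp only [cube, ofPred_forall]
    exact .iInter fun j => Metric.isClosed_closedBall.measurableSet.preimage (by fun_prop)
  have hf_le : (fun z => ENNReal.ofReal (f z)) ≤ cube.indicator fun _ => ENNReal.ofReal M := by
    intro z
    show ENNReal.ofReal (f z) ≤ _
    by_cases hz : z ∈ cube
    · rw [indicator_of_mem hz]
      exact ENNReal.ofReal_le_ofReal (hM (mem_range_self z))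
    · rw [indicator_of_notMem hz,
        image_eq_zero_of_notMem_tsupport (f := f) fun h => hz fun j => ?_, ENNReal.ofReal_zero]
      simpa using (PiLp.norm_apply_le z j).trans (mem_closedBall_zero_iff.mp (hR h))
  refine ⟨M.toNNReal * (2 * R).toNNReal ^ (Fintype.card ι - 1), fun i a b => ?_⟩
  calc volume.withDensity (fun z => ENNReal.ofReal (f z)) {z | z i ∈ Ioc a b}
      ≤ (ENNReal.ofReal M • volume.restrict cube) {z | z i ∈ Ioc a b} := by
        rw [← withDensity_const, ← withDensity_indicator hcube]
        exact withDensity_mono (.of_forall hf_le) _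
    _ ≤ ENNReal.ofReal M *
          (ENNReal.ofReal (2 * R) ^ (Fintype.card ι - 1) * ENNReal.ofReal (b - a)) := by
        rw [Measure.smul_apply, smul_eq_mul, Measure.restrict_apply
          (show MeasurableSet {z : EuclideanSpace ℝ ι | z i ∈ Ioc a b} from
            measurableSet_Ioc.preimage (by fun_prop))]
        gcongr
        exact volume_slab_inter_cube_le i a b R
    _ = _ := by
        simp only [ENNReal.ofReal, ENNReal.coe_mul, ENNReal.coe_pow, mul_assoc]

def lowerOrthant (x : EuclideanSpace ℝ ι) : Set (EuclideanSpace ℝ ι) := {z | ∀ i, z i ≤ x i}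

theorem isClosed_lowerOrthant (x : EuclideanSpace ℝ ι) : IsClosed (lowerOrthant x) := by
  simp only [lowerOrthant, ofPred_forall]
  exact isClosed_iInter fun i => isClosed_le (by fun_prop) continuous_const

theorem lowerOrthant_mono {x y : EuclideanSpace ℝ ι} (h : ∀ i, y i ≤ x i) :
    lowerOrthant y ⊆ lowerOrthant x :=
  fun _ hz i => (hz i).trans (h i)

theorem lowerOrthant_diff_subset (x y : EuclideanSpace ℝ ι) :
    lowerOrthant x \ lowerOrthant y ⊆ ⋃ i, {z | z i ∈ Ioc (y i) (x i)} := by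
  rintro z ⟨hzx, hzy⟩
  obtain ⟨i, hi⟩ := not_forall.mp hzy
  exact mem_iUnion.mpr ⟨i, lt_of_not_ge hi, hzx i⟩

theorem measureReal_lowerOrthant_sub_le [Fintype ι] {μ : Measure (EuclideanSpace ℝ ι)}
    [IsFiniteMeasure μ] {K : ℝ≥0} (hμ : ∀ i a b, μ {z | z i ∈ Ioc a b} ≤ K * ENNReal.ofReal (b - a))
    (x y : EuclideanSpace ℝ ι) :
    μ.real (lowerOrthant x) - μ.real (lowerOrthant y) ≤ Fintype.card ι * K * dist x y := by
  have hslab : ∀ i, μ {z | z i ∈ Ioc (y i) (x i)} ≤ K * ENNReal.ofReal (dist x y) := fun i =>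
    (hμ i _ _).trans (by
      gcongr
      exact (le_abs_self _).trans ((Real.dist_eq _ _).symm.trans_le (PiLp.dist_apply_le x y i)))
  have hdiff :
      μ (lowerOrthant x \ lowerOrthant y) ≤ Fintype.card ι * (K * ENNReal.ofReal (dist x y)) :=
    calc μ (lowerOrthant x \ lowerOrthant y)
        ≤ ∑ i, μ {z | z i ∈ Ioc (y i) (x i)} :=
          (measure_mono (lowerOrthant_diff_subset x y)).trans (measure_iUnion_fintype_le _ _)
      _ ≤ ∑ _i : ι, K * ENNReal.ofReal (dist x y) := Finset.sum_le_sum fun i _ => hslab i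
      _ = Fintype.card ι * (K * ENNReal.ofReal (dist x y)) := by
          rw [Finset.sum_const, Finset.card_univ, nsmul_eq_mul]
  refine (le_measureReal_sdiff).trans ?_
  rw [measureReal_def]
  refine (ENNReal.toReal_mono (by finiteness) hdiff).trans_eq ?_
  simp [ENNReal.toReal_mul, dist_nonneg, mul_assoc]

theorem lipschitzWith_measureReal_lowerOrthant [Fintype ι] {μ : Measure (EuclideanSpace ℝ ι)}
    [IsFiniteMeasure μ] {K : ℝ≥0}
    (hμ : ∀ i a b, μ {z | z i ∈ Ioc a b} ≤ K * ENNReal.ofReal (b - a)) :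
    LipschitzWith (Fintype.card ι * K) fun x => μ.real (lowerOrthant x) :=
  LipschitzWith.of_le_add_mul _ fun x y => by
    have := measureReal_lowerOrthant_sub_le hμ x y
    push_cast
    linarith

end Orthant

theorem multivariate_cdf_moduli_general
    {Ω : Type*} [MeasureSpace Ω] [IsProbabilityMeasure (ℙ : Measure Ω)]
    (m : ℕ) (X : Ω → EuclideanSpace ℝ (Fin m)) (hX : Measurable X)
    (f : EuclideanSpace ℝ (Fin m) → ℝ)
    (hf_cont : Continuous f) (hf_supp : HasCompactSupport f)
    (hdens : Measure.map X ℙ = volume.withDensity fun x => ENNReal.ofReal (f x))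
    (D : Set (EuclideanSpace ℝ (Fin m))) (hD : D = tsupport f)
    (q : EuclideanSpace ℝ (Fin m) → ℝ)
    (hq : ∀ x, q x = (ℙ {ω | ∀ i, X ω i ≤ x i}).toReal)
    (hq_mono : ∀ x ∈ D, ∀ y ∈ D, (∀ i, y i ≤ x i) → y ≠ x → q y < q x) :
    ∃ Fm Fp : ℝ → ℝ,
      MonotoneOn Fm (Set.Ioi (0 : ℝ)) ∧ MonotoneOn Fp (Set.Ioi (0 : ℝ)) ∧
      (∀ ε : ℝ, 0 < ε → 0 < Fm ε) ∧ (∀ ε : ℝ, 0 < ε → 0 < Fp ε) ∧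
      Filter.Tendsto Fm (nhdsWithin 0 (Set.Ioi 0)) (nhds 0) ∧
      Filter.Tendsto Fp (nhdsWithin 0 (Set.Ioi 0)) (nhds 0) ∧
      ∀ x ∈ D, ∀ y ∈ D, (∀ i, y i ≤ x i) →
        Fm (‖x - y‖) ≤ q x - q y ∧ q x - q y ≤ Fp (‖x - y‖) := by
  subst hD
  let μ := Measure.map X ℙ
  have : IsProbabilityMeasure μ := Measure.isProbabilityMeasure_map hX.aemeasurable
  have hqμ : q = fun x => μ.real (lowerOrthant x) := funext fun x => by
    rw [hq, map_measureReal_apply hX (isClosed_lowerOrthant x).measurableSet]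
    rfl
  obtain ⟨K, hK⟩ := exists_withDensity_slab_le hf_cont hf_supp
  have hq_lip : LipschitzWith _ q :=
    hqμ ▸ lipschitzWith_measureReal_lowerOrthant (μ := μ) (hdens ▸ hK)
  obtain ⟨Fp, hFp, hqFp⟩ := hq_lip.exists_isModulus
  let s := tsupport f ×ˢ tsupport f ∩ {p : EuclideanSpace ℝ (Fin m) × _ | ∀ i, p.2 i ≤ p.1 i}
  have hs : IsCompact s := (hf_supp.prod hf_supp).inter_right <| by
    simp only [ofPred_forall]
    exact isClosed_iInter fun i => isClosed_le (by fun_prop) (by fun_prop)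
  have hq_cont : Continuous q := hq_lip.continuous
  have hFm := isModulus_lowerModulus (g := fun p => q p.1 - q p.2) (d := fun p => ‖p.1 - p.2‖) hs
    (by fun_prop) (by fun_prop) fun ⟨x, y⟩ ⟨⟨hx, hy⟩, hyx⟩ hxy =>
      sub_pos.2 (hq_mono x hx y hy hyx fun h => by simp [h] at hxy)
  refine ⟨_, Fp, hFm.monotoneOn, hFp.monotoneOn, hFm.pos, hFp.pos, hFm.tendsto, hFp.tendsto,
    fun x hx y hy hyx => ⟨lowerModulus_le hs (by fun_prop) (p := (x, y)) ⟨⟨hx, hy⟩, hyx⟩, ?_⟩⟩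
  rw [← dist_eq_norm]
  exact (le_abs_self _).trans (hqFp x y)

/-- **Lemma (moduli of a multivariate CDF).**  Let `X` be a random vector in `ℝ^m` whose
distribution has a continuous density `f` with compact support, let
`q(x) = P(X ⪯ x)` (coordinatewise order), and assume `q` is strictly increasing on the compact
domain `D` (the support of the density), in the sense that `q(y) < q(x)` whenever
`x, y ∈ D`, `y ⪯ x` and `y ≠ x`.  Then there exist monotonically increasing functions
`F₋, F₊ : (0, ∞) → ℝ`, positive on `(0, ∞)` and tending to `0` at `0⁺`, such that for all
`x, y ∈ D` with `y ⪯ x`: `F₋(‖x − y‖₂) ≤ q(x) − q(y) ≤ F₊(‖x − y‖₂)`. -/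
theorem multivariate_cdf_moduli
    {Ω : Type*} [MeasureSpace Ω] [IsProbabilityMeasure (ℙ : Measure Ω)]
    (m : ℕ) (X : Ω → EuclideanSpace ℝ (Fin m)) (hX : Measurable X)
    (f : EuclideanSpace ℝ (Fin m) → ℝ)
    (hf_cont : Continuous f) (hf_supp : HasCompactSupport f) (hf_nonneg : ∀ x, 0 ≤ f x)
    (hdens : Measure.map X ℙ = volume.withDensity fun x => ENNReal.ofReal (f x))
    (D : Set (EuclideanSpace ℝ (Fin m))) (hD : D = tsupport f)
    (q : EuclideanSpace ℝ (Fin m) → ℝ)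
    (hq : ∀ x, q x = (ℙ {ω | ∀ i, X ω i ≤ x i}).toReal)
    (hq_mono : ∀ x ∈ D, ∀ y ∈ D, (∀ i, y i ≤ x i) → y ≠ x → q y < q x) :
    ∃ Fm Fp : ℝ → ℝ,
      MonotoneOn Fm (Set.Ioi (0 : ℝ)) ∧ MonotoneOn Fp (Set.Ioi (0 : ℝ)) ∧
      (∀ ε : ℝ, 0 < ε → 0 < Fm ε) ∧ (∀ ε : ℝ, 0 < ε → 0 < Fp ε) ∧
      Filter.Tendsto Fm (nhdsWithin 0 (Set.Ioi 0)) (nhds 0) ∧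
      Filter.Tendsto Fp (nhdsWithin 0 (Set.Ioi 0)) (nhds 0) ∧
      ∀ x ∈ D, ∀ y ∈ D, (∀ i, y i ≤ x i) →
        Fm (‖x - y‖) ≤ q x - q y ∧ q x - q y ≤ Fp (‖x - y‖) :=
  multivariate_cdf_moduli_general m X hX f hf_cont hf_supp hdens D hD q hq hq_mono
end

section
/- (Misclassification perturbation bound, step in the proof of Theorem 1) Let (X,A,Y) be a random element with A, Y ∈ {0,1}, let f, f* : 𝒳×{0,1} → [0,1] satisfy |f(x,a) − f*(x,a)| ≤ ε₀ for all (x,a), and let t_a, λ_a ∈ [0,1] be thresholds for a ∈ {0,1}. Suppose there is a monotone function F₊* such that for every a ∈ {0,1} and every s ≤ t, P(s ≤ f*(X,A) ≤ t, A=a) ≤ F₊*(t−s)·P(A=a). Define classifiers φ₀(x,a) = 1{f(x,a) > t_a} and φ*(x,a) = 1{f*(x,a) > λ_a}. Then |P(φ₀(X,A) ≠ Y) − P(φ*(X,A) ≠ Y)| ≤ F₊*(2ε₀) + F₊*(max_a |t_a − λ_a|). -/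
open MeasureTheory ProbabilityTheory

/-- **Misclassification perturbation bound** (a step in the proof of Theorem 1 of FedFaiREE).
Let `(X, A, Y)` be a random element with `A, Y ∈ {0,1}`, let `f, f* : 𝒳 × {0,1} → [0,1]`
satisfy `|f(x,a) − f*(x,a)| ≤ ε₀` for all `(x, a)`, and let `t a, λ a ∈ [0,1]` be thresholds.
Suppose `F₊*` is monotone and for every `a` and `s ≤ t`,
`P(s ≤ f*(X, a) ≤ t, A = a) ≤ F₊*(t − s) · P(A = a)`.  For the classifiers
`φ₀(x,a) = 1{f(x,a) > t a}` and `φ*(x,a) = 1{f*(x,a) > λ a}`,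
`|P(φ₀(X,A) ≠ Y) − P(φ*(X,A) ≠ Y)| ≤ F₊*(2ε₀) + F₊*(max_a |t a − λ a|)`. -/
theorem misclassification_perturbation_bound
    {Ω : Type*} [MeasureSpace Ω] [IsProbabilityMeasure (ℙ : Measure Ω)]
    {𝒳 : Type*} [MeasurableSpace 𝒳]
    (X : Ω → 𝒳) (A : Ω → Fin 2) (Y : Ω → Fin 2)
    (hX : Measurable X) (hA : Measurable A) (hY : Measurable Y)
    (f fstar : 𝒳 × Fin 2 → ℝ)
    (hf : Measurable f) (hfstar : Measurable fstar)
    (hf_range : ∀ x a, f (x, a) ∈ Set.Icc (0 : ℝ) 1)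
    (hfstar_range : ∀ x a, fstar (x, a) ∈ Set.Icc (0 : ℝ) 1)
    (ε₀ : ℝ) (hclose : ∀ x a, |f (x, a) - fstar (x, a)| ≤ ε₀)
    (th lam : Fin 2 → ℝ)
    (hth : ∀ a, th a ∈ Set.Icc (0 : ℝ) 1) (hlam : ∀ a, lam a ∈ Set.Icc (0 : ℝ) 1)
    (Fp : ℝ → ℝ) (hFp_mono : Monotone Fp)
    (hFp : ∀ (a : Fin 2) (s u : ℝ), s ≤ u →
      (ℙ {ω | s ≤ fstar (X ω, a) ∧ fstar (X ω, a) ≤ u ∧ A ω = a}).toReal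
        ≤ Fp (u - s) * (ℙ {ω | A ω = a}).toReal) :
    |(ℙ {ω | (if th (A ω) < f (X ω, A ω) then (1 : Fin 2) else 0) ≠ Y ω}).toReal
        - (ℙ {ω | (if lam (A ω) < fstar (X ω, A ω) then (1 : Fin 2) else 0) ≠ Y ω}).toReal|
      ≤ Fp (2 * ε₀) + Fp (max |th 0 - lam 0| |th 1 - lam 1|) := by
  -- Ω is nonempty
  have hΩ : Nonempty Ω := by
    by_contra h
    rw [not_nonempty_iff] at h
    have : (ℙ : Measure Ω) Set.univ = 1 := measure_univ
    rw [Set.univ_eq_empty_iff.mpr h, measure_empty] at this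
    exact zero_ne_one this
  obtain ⟨ω₀⟩ := hΩ
  have hε : 0 ≤ ε₀ := le_trans (abs_nonneg _) (hclose (X ω₀) 0)
  set φ₀ : Ω → Fin 2 := fun ω => if th (A ω) < f (X ω, A ω) then 1 else 0 with hφ₀
  set φs : Ω → Fin 2 := fun ω => if lam (A ω) < fstar (X ω, A ω) then 1 else 0 with hφs
  set E1 : Set Ω := {ω | φ₀ ω ≠ Y ω} with hE1
  set E2 : Set Ω := {ω | φs ω ≠ Y ω} with hE2
  set D : Set Ω := {ω | φ₀ ω ≠ φs ω} with hD
  set S1 : Fin 2 → Set Ω := fun a =>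
    {ω | th a - ε₀ ≤ fstar (X ω, a) ∧ fstar (X ω, a) ≤ th a + ε₀ ∧ A ω = a} with hS1
  set S2 : Fin 2 → Set Ω := fun a =>
    {ω | min (th a) (lam a) ≤ fstar (X ω, a) ∧ fstar (X ω, a) ≤ max (th a) (lam a) ∧ A ω = a}
    with hS2
  have htwo : ∀ b : Fin 2, b = 0 ∨ b = 1 := by decide
  -- D is contained in the union of the four strips
  have hDsub : D ⊆ S1 0 ∪ (S2 0 ∪ (S1 1 ∪ S2 1)) := by
    intro ω hω
    simp only [hD, Set.mem_setOf_eq, hφ₀, hφs] at hω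
    have key : ∀ a : Fin 2, A ω = a → ω ∈ S1 a ∪ S2 a := by
      intro a ha
      rw [ha] at hω
      have habs := abs_le.mp (hclose (X ω) a)
      by_cases hF : th a < f (X ω, a) <;> by_cases hG : lam a < fstar (X ω, a) <;>
        simp only [hF, hG, if_pos, if_neg, not_lt] at hω <;> try exact absurd rfl hω
      · -- th a < f, fstar ≤ lam a
        push_neg at hG
        by_cases hup : fstar (X ω, a) ≤ th a + ε₀
        · exact Or.inl ⟨by linarith [habs.2], hup, ha⟩
        · push_neg at hup
          exact Or.inr ⟨le_trans (min_le_left _ _) (by linarith),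
            le_trans hG (le_max_right _ _), ha⟩
      · -- f ≤ th a, lam a < fstar
        push_neg at hF
        by_cases hlo : th a - ε₀ ≤ fstar (X ω, a)
        · exact Or.inl ⟨hlo, by linarith [habs.1], ha⟩
        · push_neg at hlo
          exact Or.inr ⟨le_trans (min_le_right _ _) (le_of_lt hG),
            le_trans (by linarith) (le_max_left _ _), ha⟩
    rcases htwo (A ω) with ha | ha
    · rcases key 0 ha with h | h
      · exact Or.inl h
      · exact Or.inr (Or.inl h)
    · rcases key 1 ha with h | h
      · exact Or.inr (Or.inr (Or.inl h))
      · exact Or.inr (Or.inr (Or.inr h))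
  -- symmetric difference bound
  have hE1sub : E1 ⊆ E2 ∪ D := by
    intro ω h
    by_cases hd : φ₀ ω = φs ω
    · left; show φs ω ≠ Y ω; rw [← hd]; exact h
    · exact Or.inr hd
  have hE2sub : E2 ⊆ E1 ∪ D := by
    intro ω h
    by_cases hd : φ₀ ω = φs ω
    · left; show φ₀ ω ≠ Y ω; rw [hd]; exact h
    · exact Or.inr hd
  have hfin : ∀ s : Set Ω, (ℙ : Measure Ω) s ≠ ⊤ := fun s => measure_ne_top _ _
  have habs1 : (ℙ E1).toReal ≤ (ℙ E2).toReal + (ℙ D).toReal := by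
    rw [← ENNReal.toReal_add (hfin _) (hfin _)]
    exact ENNReal.toReal_mono (by finiteness)
      (le_trans (measure_mono hE1sub) (measure_union_le _ _))
  have habs2 : (ℙ E2).toReal ≤ (ℙ E1).toReal + (ℙ D).toReal := by
    rw [← ENNReal.toReal_add (hfin _) (hfin _)]
    exact ENNReal.toReal_mono (by finiteness)
      (le_trans (measure_mono hE2sub) (measure_union_le _ _))
  -- bound μ D
  have hDle : (ℙ D).toReal ≤ (ℙ (S1 0)).toReal + (ℙ (S2 0)).toReal
      + (ℙ (S1 1)).toReal + (ℙ (S2 1)).toReal := by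
    have h1 : (ℙ : Measure Ω) D ≤ ℙ (S1 0) + (ℙ (S2 0) + (ℙ (S1 1) + ℙ (S2 1))) := by
      refine le_trans (measure_mono hDsub) ?_
      refine le_trans (measure_union_le _ _) ?_
      gcongr
      refine le_trans (measure_union_le _ _) ?_
      gcongr
      exact measure_union_le _ _
    have := ENNReal.toReal_mono (by finiteness) h1
    rw [ENNReal.toReal_add (hfin _) (by finiteness), ENNReal.toReal_add (hfin _) (by finiteness),
      ENNReal.toReal_add (hfin _) (hfin _)] at this
    linarith
  -- strip bounds via hFp
  have hstrip1 : ∀ a : Fin 2, (ℙ (S1 a)).toReal ≤ Fp (2 * ε₀) * (ℙ {ω | A ω = a}).toReal := by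
    intro a
    have := hFp a (th a - ε₀) (th a + ε₀) (by linarith)
    rwa [show th a + ε₀ - (th a - ε₀) = 2 * ε₀ by ring] at this
  have hstrip2 : ∀ a : Fin 2, (ℙ (S2 a)).toReal
      ≤ Fp (max |th 0 - lam 0| |th 1 - lam 1|) * (ℙ {ω | A ω = a}).toReal := by
    intro a
    have h := hFp a (min (th a) (lam a)) (max (th a) (lam a)) (min_le_max)
    rw [max_sub_min_eq_abs] at h
    refine le_trans h (mul_le_mul_of_nonneg_right ?_ ENNReal.toReal_nonneg)
    apply hFp_mono
    rcases htwo a with ha | ha <;> rw [ha, abs_sub_comm]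
    · exact le_max_left _ _
    · exact le_max_right _ _
  -- the two groups sum to 1
  have hpsum : (ℙ {ω | A ω = (0 : Fin 2)}).toReal + (ℙ {ω | A ω = (1 : Fin 2)}).toReal = 1 := by
    have hdisj : Disjoint {ω | A ω = (0 : Fin 2)} {ω | A ω = (1 : Fin 2)} := by
      rw [Set.disjoint_left]
      intro ω h0 h1
      simp only [Set.mem_setOf_eq] at h0 h1
      rw [h0] at h1; exact absurd h1 (by decide)
    have hmeas : MeasurableSet {ω | A ω = (1 : Fin 2)} := hA (measurableSet_singleton 1)
    have huniv : {ω | A ω = (0 : Fin 2)} ∪ {ω | A ω = (1 : Fin 2)} = Set.univ := by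
      ext ω
      simp only [Set.mem_union, Set.mem_setOf_eq, Set.mem_univ, iff_true]
      exact htwo (A ω)
    have := measure_union (μ := (ℙ : Measure Ω)) hdisj hmeas
    rw [huniv, measure_univ] at this
    rw [← ENNReal.toReal_add (hfin _) (hfin _), ← this, ENNReal.toReal_one]
  set p0 := (ℙ {ω | A ω = (0 : Fin 2)}).toReal
  set p1 := (ℙ {ω | A ω = (1 : Fin 2)}).toReal
  have hc1 : Fp (2 * ε₀) * p0 + Fp (2 * ε₀) * p1 = Fp (2 * ε₀) := by
    rw [← mul_add, hpsum, mul_one]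
  have hc2 : Fp (max |th 0 - lam 0| |th 1 - lam 1|) * p0
      + Fp (max |th 0 - lam 0| |th 1 - lam 1|) * p1
      = Fp (max |th 0 - lam 0| |th 1 - lam 1|) := by
    rw [← mul_add, hpsum, mul_one]
  have h10 := hstrip1 0
  have h11 := hstrip1 1
  have h20 := hstrip2 0
  have h21 := hstrip2 1
  rw [abs_sub_le_iff]
  constructor <;> linarith
end

section
/- (DEOO perturbation bound, step in the proof of Theorem 1) Let (X,A,Y) be a random element with A, Y ∈ {0,1}, let f, f* : 𝒳×{0,1} → [0,1] satisfy |f(x,a) − f*(x,a)| ≤ ε₀ for all (x,a), and let t_a, λ_a ∈ [0,1] be thresholds for a ∈ {0,1}. Suppose there is a monotone function F₊* such that for every a ∈ {0,1} and every s ≤ t, P(s ≤ f*(X,A) ≤ t | Y=1, A=a) ≤ F₊*(t−s). Define φ₀(x,a) = 1{f(x,a) > t_a} and φ*(x,a) = 1{f*(x,a) > λ_a}. Then | |DEOO(φ₀)| − |DEOO(φ*)| | ≤ 2F₊*(2ε₀) + 2F₊*(max_a |t_a − λ_a|). -/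
open MeasureTheory ProbabilityTheory

lemma arm_bound {Ω : Type*} [MeasureSpace Ω] [IsProbabilityMeasure (ℙ : Measure Ω)]
    (C : Set Ω) (g h : Ω → ℝ) (t l ε₀ M : ℝ) (hε : 0 ≤ ε₀)
    (hclose : ∀ ω, |g ω - h ω| ≤ ε₀)
    (hM : |t - l| ≤ M)
    (p : ℝ) (hp : 0 < p)
    (Fp : ℝ → ℝ) (hFp_mono : Monotone Fp)
    (hFp : ∀ s u, s ≤ u → (ℙ {ω | s ≤ h ω ∧ h ω ≤ u ∧ ω ∈ C}).toReal / p ≤ Fp (u - s)) :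
    |(ℙ {ω | t < g ω ∧ ω ∈ C}).toReal / p - (ℙ {ω | l < h ω ∧ ω ∈ C}).toReal / p|
      ≤ Fp (2 * ε₀) + Fp M := by
  have key : ∀ S T B : Set Ω, S ⊆ T ∪ B → (ℙ S).toReal ≤ (ℙ T).toReal + (ℙ B).toReal := by
    intro S T B hST
    have h1 : ℙ S ≤ ℙ T + ℙ B := (measure_mono hST).trans (measure_union_le _ _)
    have h2 := ENNReal.toReal_mono (by finiteness) h1
    rwa [ENNReal.toReal_add (measure_ne_top _ _) (measure_ne_top _ _)] at h2
  set B₁ : Set Ω := {ω | t - ε₀ ≤ h ω ∧ h ω ≤ t + ε₀ ∧ ω ∈ C} with hB₁def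
  set B₂ : Set Ω := {ω | min t l ≤ h ω ∧ h ω ≤ max t l ∧ ω ∈ C} with hB₂def
  have hB1 : (ℙ B₁).toReal / p ≤ Fp (2 * ε₀) := by
    have := hFp (t - ε₀) (t + ε₀) (by linarith)
    convert this using 2
    ring
  have hB2 : (ℙ B₂).toReal / p ≤ Fp M := by
    refine (hFp (min t l) (max t l) min_le_max).trans (hFp_mono ?_)
    rw [max_sub_min_eq_abs, abs_sub_comm]; exact hM
  have incl1 : {ω | t < g ω ∧ ω ∈ C} ⊆ {ω | t < h ω ∧ ω ∈ C} ∪ B₁ := by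
    rintro ω ⟨htg, hC⟩
    by_cases hh : t < h ω
    · exact Or.inl ⟨hh, hC⟩
    · push_neg at hh
      have hc := abs_le.mp (hclose ω)
      exact Or.inr ⟨by linarith [hc.2], by linarith, hC⟩
  have incl1' : {ω | t < h ω ∧ ω ∈ C} ⊆ {ω | t < g ω ∧ ω ∈ C} ∪ B₁ := by
    rintro ω ⟨hth, hC⟩
    by_cases hg : t < g ω
    · exact Or.inl ⟨hg, hC⟩
    · push_neg at hg
      have hc := abs_le.mp (hclose ω)
      exact Or.inr ⟨by linarith, by linarith [hc.1], hC⟩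
  have incl2 : {ω | t < h ω ∧ ω ∈ C} ⊆ {ω | l < h ω ∧ ω ∈ C} ∪ B₂ := by
    rintro ω ⟨hth, hC⟩
    by_cases hl : l < h ω
    · exact Or.inl ⟨hl, hC⟩
    · push_neg at hl
      exact Or.inr ⟨le_trans (min_le_left _ _) hth.le, le_trans hl (le_max_right _ _), hC⟩
  have incl2' : {ω | l < h ω ∧ ω ∈ C} ⊆ {ω | t < h ω ∧ ω ∈ C} ∪ B₂ := by
    rintro ω ⟨hlh, hC⟩
    by_cases ht : t < h ω
    · exact Or.inl ⟨ht, hC⟩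
    · push_neg at ht
      exact Or.inr ⟨le_trans (min_le_right _ _) hlh.le, le_trans ht (le_max_left _ _), hC⟩
  have ab1 : |(ℙ {ω | t < g ω ∧ ω ∈ C}).toReal - (ℙ {ω | t < h ω ∧ ω ∈ C}).toReal|
      ≤ (ℙ B₁).toReal :=
    abs_sub_le_iff.mpr ⟨by linarith [key _ _ _ incl1], by linarith [key _ _ _ incl1']⟩
  have ab2 : |(ℙ {ω | t < h ω ∧ ω ∈ C}).toReal - (ℙ {ω | l < h ω ∧ ω ∈ C}).toReal|
      ≤ (ℙ B₂).toReal :=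
    abs_sub_le_iff.mpr ⟨by linarith [key _ _ _ incl2], by linarith [key _ _ _ incl2']⟩
  calc |(ℙ {ω | t < g ω ∧ ω ∈ C}).toReal / p - (ℙ {ω | l < h ω ∧ ω ∈ C}).toReal / p|
      = |(ℙ {ω | t < g ω ∧ ω ∈ C}).toReal - (ℙ {ω | l < h ω ∧ ω ∈ C}).toReal| / p := by
        rw [div_sub_div_same, abs_div, abs_of_pos hp]
    _ ≤ ((ℙ B₁).toReal + (ℙ B₂).toReal) / p := by
        gcongr
        exact (abs_sub_le _ _ _).trans (add_le_add ab1 ab2)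
    _ = (ℙ B₁).toReal / p + (ℙ B₂).toReal / p := add_div _ _ _
    _ ≤ Fp (2 * ε₀) + Fp M := add_le_add hB1 hB2

/-- **DEOO perturbation bound** (a step in the proof of Theorem 1 of FedFaiREE).
Let `(X, A, Y)` be a random element with `A, Y ∈ {0,1}`, let `f, f* : 𝒳 × {0,1} → [0,1]`
satisfy `|f(x,a) − f*(x,a)| ≤ ε₀` for all `(x, a)`, and let `t a, λ a ∈ [0,1]` be thresholds.
Suppose `F₊*` is monotone and for every `a` and `s ≤ t`,
`P(s ≤ f*(X, a) ≤ t | Y = 1, A = a) ≤ F₊*(t − s)`.  For the classifiers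
`φ₀(x,a) = 1{f(x,a) > t a}` and `φ*(x,a) = 1{f*(x,a) > λ a}`, where
`DEOO(φ) = P(φ(X,A) = 1 | A = 1, Y = 1) − P(φ(X,A) = 1 | A = 0, Y = 1)`, we have
`||DEOO(φ₀)| − |DEOO(φ*)|| ≤ 2 F₊*(2ε₀) + 2 F₊*(max_a |t a − λ a|)`. -/
theorem deoo_perturbation_bound
    {Ω : Type*} [MeasureSpace Ω] [IsProbabilityMeasure (ℙ : Measure Ω)]
    {𝒳 : Type*} [MeasurableSpace 𝒳]
    (X : Ω → 𝒳) (A : Ω → Fin 2) (Y : Ω → Fin 2)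
    (hX : Measurable X) (hA : Measurable A) (hY : Measurable Y)
    (hpos : ∀ a : Fin 2, (ℙ {ω | A ω = a ∧ Y ω = 1}).toReal ≠ 0)
    (f fstar : 𝒳 × Fin 2 → ℝ)
    (hf : Measurable f) (hfstar : Measurable fstar)
    (hf_range : ∀ x a, f (x, a) ∈ Set.Icc (0 : ℝ) 1)
    (hfstar_range : ∀ x a, fstar (x, a) ∈ Set.Icc (0 : ℝ) 1)
    (ε₀ : ℝ) (hclose : ∀ x a, |f (x, a) - fstar (x, a)| ≤ ε₀)
    (th lam : Fin 2 → ℝ)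
    (hth : ∀ a, th a ∈ Set.Icc (0 : ℝ) 1) (hlam : ∀ a, lam a ∈ Set.Icc (0 : ℝ) 1)
    (Fp : ℝ → ℝ) (hFp_mono : Monotone Fp)
    (hFp : ∀ (a : Fin 2) (s u : ℝ), s ≤ u →
      (ℙ {ω | s ≤ fstar (X ω, a) ∧ fstar (X ω, a) ≤ u ∧ A ω = a ∧ Y ω = 1}).toReal
        / (ℙ {ω | A ω = a ∧ Y ω = 1}).toReal ≤ Fp (u - s)) :
    |(|(ℙ {ω | th 1 < f (X ω, 1) ∧ A ω = 1 ∧ Y ω = 1}).toReal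
          / (ℙ {ω | A ω = 1 ∧ Y ω = 1}).toReal
        - (ℙ {ω | th 0 < f (X ω, 0) ∧ A ω = 0 ∧ Y ω = 1}).toReal
          / (ℙ {ω | A ω = 0 ∧ Y ω = 1}).toReal|)
      - (|(ℙ {ω | lam 1 < fstar (X ω, 1) ∧ A ω = 1 ∧ Y ω = 1}).toReal
          / (ℙ {ω | A ω = 1 ∧ Y ω = 1}).toReal
        - (ℙ {ω | lam 0 < fstar (X ω, 0) ∧ A ω = 0 ∧ Y ω = 1}).toReal
          / (ℙ {ω | A ω = 0 ∧ Y ω = 1}).toReal|)|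
      ≤ 2 * Fp (2 * ε₀) + 2 * Fp (max |th 0 - lam 0| |th 1 - lam 1|) := by
  have hΩ : Nonempty Ω := by
    by_contra hne
    rw [not_nonempty_iff] at hne
    have h1 : (ℙ (Set.univ : Set Ω)) = 1 := measure_univ
    rw [Set.eq_empty_of_isEmpty (Set.univ : Set Ω), measure_empty] at h1
    exact zero_ne_one h1
  obtain ⟨ω₀⟩ := hΩ
  have hε : 0 ≤ ε₀ := le_trans (abs_nonneg _) (hclose (X ω₀) 0)
  set M : ℝ := max |th 0 - lam 0| |th 1 - lam 1| with hMdef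
  have harm : ∀ a : Fin 2,
      |(ℙ {ω | th a < f (X ω, a) ∧ A ω = a ∧ Y ω = 1}).toReal
          / (ℙ {ω | A ω = a ∧ Y ω = 1}).toReal
        - (ℙ {ω | lam a < fstar (X ω, a) ∧ A ω = a ∧ Y ω = 1}).toReal
          / (ℙ {ω | A ω = a ∧ Y ω = 1}).toReal| ≤ Fp (2 * ε₀) + Fp M := by
    intro a
    have hp : 0 < (ℙ {ω | A ω = a ∧ Y ω = 1}).toReal :=
      lt_of_le_of_ne ENNReal.toReal_nonneg (Ne.symm (hpos a))
    have hMa : |th a - lam a| ≤ M := by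
      fin_cases a
      · exact le_max_left _ _
      · exact le_max_right _ _
    exact arm_bound {ω | A ω = a ∧ Y ω = 1} (fun ω => f (X ω, a)) (fun ω => fstar (X ω, a))
      (th a) (lam a) ε₀ M hε (fun ω => hclose (X ω) a) hMa _ hp Fp hFp_mono
      (fun s u hsu => hFp a s u hsu)
  have h1 := harm 1
  have h0 := harm 0
  set x1 := (ℙ {ω | th 1 < f (X ω, 1) ∧ A ω = 1 ∧ Y ω = 1}).toReal
      / (ℙ {ω | A ω = 1 ∧ Y ω = 1}).toReal
  set x0 := (ℙ {ω | th 0 < f (X ω, 0) ∧ A ω = 0 ∧ Y ω = 1}).toReal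
      / (ℙ {ω | A ω = 0 ∧ Y ω = 1}).toReal
  set y1 := (ℙ {ω | lam 1 < fstar (X ω, 1) ∧ A ω = 1 ∧ Y ω = 1}).toReal
      / (ℙ {ω | A ω = 1 ∧ Y ω = 1}).toReal
  set y0 := (ℙ {ω | lam 0 < fstar (X ω, 0) ∧ A ω = 0 ∧ Y ω = 1}).toReal
      / (ℙ {ω | A ω = 0 ∧ Y ω = 1}).toReal
  calc |(|x1 - x0|) - (|y1 - y0|)| ≤ |(x1 - x0) - (y1 - y0)| := abs_abs_sub_abs_le_abs_sub _ _
    _ = |(x1 - y1) - (x0 - y0)| := by ring_nf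
    _ ≤ |x1 - y1| + |x0 - y0| := abs_sub _ _
    _ ≤ 2 * Fp (2 * ε₀) + 2 * Fp M := by linarith
end
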